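/- arXiv:2107.06856 — 2 statements merged into one kernel-verified Lean document; each statement's English description precedes it below -/
import Mathlib

section
/- In the one-relator group G = ⟨x, y ∣ x²yx⁻²y⁻¹xy⟩, the element xy is not equal to the identity. -/
open FreeGroup in
/-- The single relator `x²yx⁻²y⁻¹xy`, where `x = of 0` and `y = of 1` in `F(x,y)`. -/
def rels3 : Set (FreeGroup (Fin 2)) :=
  {of 0 * of 0 * of 1 * (of 0)⁻¹ * (of 0)⁻¹ * (of 1)⁻¹ * of 0 * of 1}

/-- Permutation a = (1 2 3) on the last three points. -/
def permA : Equiv.Perm (Fin 4) :=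
  ⟨![0,2,3,1], ![0,3,1,2], by decide, by decide⟩

/-- Permutation b = (0 1 2). -/
def permB : Equiv.Perm (Fin 4) :=
  ⟨![1,2,0,3], ![2,0,1,3], by decide, by decide⟩

def fmap : Fin 2 → Equiv.Perm (Fin 4) := ![permA, permB]

lemma rels3_map : ∀ r ∈ rels3, FreeGroup.lift fmap r = 1 := by
  intro r hr
  rw [rels3, Set.mem_singleton_iff] at hr
  subst hr
  simp only [map_mul, map_inv, FreeGroup.lift_apply_of]
  decide

noncomputable def φ : PresentedGroup rels3 →* Equiv.Perm (Fin 4) :=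
  PresentedGroup.toGroup rels3_map

theorem xy_ne_one_in_one_relator_group :
    PresentedGroup.of (rels := rels3) 0 * PresentedGroup.of (rels := rels3) 1 ≠ 1 := by
  intro h
  have := congrArg φ h
  rw [map_mul, map_one] at this
  simp only [φ, PresentedGroup.toGroup.of] at this
  revert this
  decide
end

section
/- Let Q be the symmetric bilinear form on ℤ^(2+a+2b) given by the block-diagonal matrix with one block [[−2,−2],[−2,−6]], a blocks [−4], and b blocks [[−4,−1],[−1,−4]] (a, b ≥ 0). Then every σ with Q(σ,σ) = −2 is, up to sign, the first standard basis vector e₁. -/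
open Finset in
/-- Self-pairing of the block-diagonal form: one block `[[-2,-2],[-2,-6]]`,
`a` blocks `[-4]`, and `b` blocks `[[-4,-1],[-1,-4]]`,
on `ℤ² × (ℤ^a) × (ℤ²)^b`. -/
def Q6 {a b : ℕ} (σ : (ℤ × ℤ) × (Fin a → ℤ) × (Fin b → ℤ × ℤ)) : ℤ :=
  (-2 * σ.1.1^2 + -4 * σ.1.1 * σ.1.2 + -6 * σ.1.2^2)
    + ∑ i : Fin a, -4 * (σ.2.1 i)^2
    + ∑ j : Fin b,
        (-4 * (σ.2.2 j).1^2 + -2 * (σ.2.2 j).1 * (σ.2.2 j).2 + -4 * (σ.2.2 j).2^2)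

lemma sum_nonpos_le_term {n : ℕ} (F : Fin n → ℤ) (hF : ∀ i, F i ≤ 0) (i : Fin n) :
    ∑ j, F j ≤ F i := by
  have h1 : F i + ∑ x ∈ Finset.univ.erase i, F x = ∑ x, F x :=
    Finset.add_sum_erase _ F (Finset.mem_univ i)
  have h2 : ∑ x ∈ Finset.univ.erase i, F x ≤ 0 :=
    Finset.sum_nonpos fun j _ => hF j
  linarith

theorem square_neg_two_up_to_sign_e1 (a b : ℕ)
    (σ : (ℤ × ℤ) × (Fin a → ℤ) × (Fin b → ℤ × ℤ)) (h : Q6 σ = -2) :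
    σ = (((1 : ℤ), (0 : ℤ)), 0, 0) ∨ σ = -(((1 : ℤ), (0 : ℤ)), 0, 0) := by
  obtain ⟨⟨x, y⟩, f, g⟩ := σ
  simp only [Q6] at h
  set S1 : ℤ := ∑ i : Fin a, -4 * (f i)^2 with hS1
  set S2 : ℤ := ∑ j : Fin b,
      (-4 * (g j).1^2 + -2 * (g j).1 * (g j).2 + -4 * (g j).2^2) with hS2
  have h1 : S1 ≤ 0 := by
    apply Finset.sum_nonpos
    intro i _
    nlinarith [sq_nonneg (f i)]
  have h2 : S2 ≤ 0 := by
    apply Finset.sum_nonpos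
    intro j _
    nlinarith [sq_nonneg ((g j).1 + (g j).2), sq_nonneg (g j).1, sq_nonneg (g j).2]
  have hA : -2 * x^2 + -4 * x * y + -6 * y^2 ≤ 0 := by
    nlinarith [sq_nonneg (x + y), sq_nonneg y]
  -- each term ≥ sum for nonpositive sums
  have hf : ∀ i : Fin a, -4 * (f i)^2 ≥ S1 :=
    fun i => sum_nonpos_le_term _ (fun i => by nlinarith [sq_nonneg (f i)]) i
  have hg : ∀ j : Fin b,
      -4 * (g j).1^2 + -2 * (g j).1 * (g j).2 + -4 * (g j).2^2 ≥ S2 :=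
    fun j => sum_nonpos_le_term _ (fun j => by
      nlinarith [sq_nonneg ((g j).1 + (g j).2), sq_nonneg (g j).1, sq_nonneg (g j).2]) j
  have hfz : f = 0 := by
    funext i
    have h3 := hf i
    have : (f i) = 0 := by nlinarith [sq_nonneg (f i)]
    simpa using this
  have hgz : g = 0 := by
    funext j
    have h3 := hg j
    have hu : (g j).1 = 0 ∧ (g j).2 = 0 := by
      constructor <;>
        nlinarith [sq_nonneg ((g j).1 + (g j).2), sq_nonneg ((g j).1 - (g j).2),
          sq_nonneg (g j).1, sq_nonneg (g j).2]
    exact Prod.ext hu.1 hu.2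
  have hS1z : S1 = 0 := by
    rw [hS1, hfz]; simp
  have hS2z : S2 = 0 := by
    rw [hS2, hgz]; simp
  rw [hS1z, hS2z] at h
  have hy : y = 0 := by nlinarith [sq_nonneg (x + y), sq_nonneg y]
  subst hy
  have hx : (x - 1) * (x + 1) = 0 := by nlinarith
  rcases mul_eq_zero.mp hx with hx1 | hx1
  · left
    have : x = 1 := by omega
    simp [this, hfz, hgz]
  · right
    have : x = -1 := by omega
    simp [this, hfz, hgz, Prod.ext_iff]
end
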